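/- arXiv:math-ph/0601063 — 6 statements merged into one kernel-verified Lean document; each statement's English description precedes it below -/
import Mathlib

section
/- For 1 ≤ p ≤ ∞, the bound ‖T‖_{p-p} ≤ n^{1-1/p} of Theorem 1 is attained by the trace map tr : M_n(ℂ) → ℂ (viewed as a completely positive trace preserving map into the 1×1 matrices): indeed |tr(𝟙)| = n = n^{1-1/p} ‖𝟙‖_p, so sup_{A≠0} |tr(A)| / ‖A‖_p = n^{1-1/p}. -/
open scoped ENNReal ComplexOrder

/-- The singular values of a complex square matrix `A`, i.e. the (square roots of the)
eigenvalues of `Aᴴ * A`. -/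
noncomputable def singularValues {n : ℕ} (A : Matrix (Fin n) (Fin n) ℂ) : Fin n → ℝ :=
  fun i => Real.sqrt ((Matrix.posSemidef_conjTranspose_mul_self A).isHermitian.eigenvalues i)

/-- The Schatten `p`-norm `‖A‖_p = (tr |A|^p)^{1/p}`; for `p = ∞` it is the operator
(largest singular value) norm. -/
noncomputable def schattenNorm {n : ℕ} (p : ℝ≥0∞) (A : Matrix (Fin n) (Fin n) ℂ) : ℝ :=
  if p = ⊤ then ⨆ i, singularValues A i
  else (∑ i, singularValues A i ^ p.toReal) ^ (1 / p.toReal)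

/-- A linear map between matrix algebras is positive if it maps positive semi-definite
matrices to positive semi-definite matrices. -/
def IsPositiveMatrixMap {n r : ℕ} (T : Matrix (Fin n) (Fin n) ℂ →ₗ[ℂ] Matrix (Fin r) (Fin r) ℂ) :
    Prop :=
  ∀ A : Matrix (Fin n) (Fin n) ℂ, A.PosSemidef → (T A).PosSemidef

/-- A linear map between matrix algebras is trace preserving if `tr T(A) = tr A` for all `A`. -/
def IsTracePreservingMap {n r : ℕ}
    (T : Matrix (Fin n) (Fin n) ℂ →ₗ[ℂ] Matrix (Fin r) (Fin r) ℂ) : Prop :=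
  ∀ A : Matrix (Fin n) (Fin n) ℂ, (T A).trace = A.trace

/- Conjugating `A` by a unitary that diagonalizes `Aᴴ * A` preserves the trace and makes the
columns orthogonal with lengths the singular values `σ i`, so each diagonal entry has modulus at
most `σ i` and `‖tr A‖ ≤ ∑ σ i`. Hölder's inequality bounds `∑ σ i` by `n ^ (1 - 1/p) ‖σ‖_p`.
The identity, whose singular values are all `1`, turns both inequalities into equalities. -/

open Matrix

lemma Matrix.norm_apply_le_sqrt_re_conjTranspose_mul_self_apply {𝕜 m n : Type*} [RCLike 𝕜]
    [Fintype m] (C : Matrix m n 𝕜) (i : m) (j : n) :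
    ‖C i j‖ ≤ √(RCLike.re ((Cᴴ * C) j j)) := by
  have hcol : RCLike.re ((Cᴴ * C) j j) = ∑ k, ‖C k j‖ ^ 2 := by
    simp [mul_apply, RCLike.conj_mul]
  rw [hcol]
  exact Real.le_sqrt_of_sq_le <|
    Finset.single_le_sum (f := fun k => ‖C k j‖ ^ 2) (fun _ _ => sq_nonneg _) (Finset.mem_univ i)

lemma Matrix.trace_conjStarAlgAut {𝕜 n : Type*} [RCLike 𝕜] [Fintype n] [DecidableEq n]
    (u : unitary (Matrix n n 𝕜)) (A : Matrix n n 𝕜) :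
    (Unitary.conjStarAlgAut 𝕜 _ u A).trace = A.trace := by
  rw [Unitary.conjStarAlgAut_apply, trace_mul_cycle, Unitary.coe_star_mul_self, one_mul]

lemma norm_trace_le_sum_singularValues {n : ℕ} (A : Matrix (Fin n) (Fin n) ℂ) :
    ‖A.trace‖ ≤ ∑ i, singularValues A i := by
  have hH := (posSemidef_conjTranspose_mul_self A).isHermitian
  set φ := Unitary.conjStarAlgAut ℂ _ (star hH.eigenvectorUnitary)
  set C := φ A
  have hCC : Cᴴ * C = diagonal (RCLike.ofReal ∘ hH.eigenvalues) := by
    rw [← hH.conjStarAlgAut_star_eigenvectorUnitary, map_mul φ, ← star_eq_conjTranspose A,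
      map_star φ]
    rfl
  calc ‖A.trace‖ = ‖∑ j, C j j‖ := by
        rw [← trace_conjStarAlgAut (star hH.eigenvectorUnitary) A]
        rfl
    _ ≤ ∑ j, ‖C j j‖ := norm_sum_le _ _
    _ ≤ ∑ j, singularValues A j := Finset.sum_le_sum fun j _ => by
        simpa [hCC, singularValues] using C.norm_apply_le_sqrt_re_conjTranspose_mul_self_apply j j

lemma Matrix.IsHermitian.eigenvalues_eq_one {𝕜 n : Type*} [RCLike 𝕜] [Fintype n] [DecidableEq n]
    {A : Matrix n n 𝕜} (hA : A.IsHermitian) (h : A = 1) : hA.eigenvalues = 1 := by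
  funext i
  have : Nonempty n := ⟨i⟩
  simpa [h, spectrum.one_eq] using hA.eigenvalues_mem_spectrum_real i

lemma singularValues_eq_one_of_mem_unitaryGroup {n : ℕ} {U : Matrix (Fin n) (Fin n) ℂ}
    (hU : U ∈ unitaryGroup (Fin n) ℂ) : singularValues U = 1 := by
  have h := (posSemidef_conjTranspose_mul_self U).isHermitian.eigenvalues_eq_one
    (by rwa [← star_eq_conjTranspose, ← mem_unitaryGroup_iff'])
  funext i
  simp [singularValues, h]

lemma sum_singularValues_le_schattenNorm {n : ℕ} {p : ℝ≥0∞} (hp : 1 ≤ p)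
    (A : Matrix (Fin n) (Fin n) ℂ) :
    ∑ i, singularValues A i ≤ (n : ℝ) ^ (1 - 1 / p.toReal) * schattenNorm p A := by
  rcases eq_or_ne p ⊤ with rfl | hp_top
  · simpa [schattenNorm] using Finset.sum_le_card_nsmul Finset.univ _ _
      fun i _ => le_ciSup (Set.finite_range (singularValues A)).bddAbove i
  · have hp_real : 1 ≤ p.toReal := by
      simpa using ENNReal.toReal_mono hp_top hp
    simpa [schattenNorm, hp_top] using
      Real.inner_le_weight_mul_Lp_of_nonneg Finset.univ hp_real 1 (singularValues A)
        (fun _ => zero_le_one) fun i => Real.sqrt_nonneg _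

-- At `p = ⊤` both sides are `1`, since `(⊤ : ℝ≥0∞).toReal = 0`.
lemma schattenNorm_one {n : ℕ} (hn : 0 < n) (p : ℝ≥0∞) :
    schattenNorm p (1 : Matrix (Fin n) (Fin n) ℂ) = (n : ℝ) ^ (1 / p.toReal) := by
  have : Nonempty (Fin n) := Fin.pos_iff_nonempty.mp hn
  have hσ := singularValues_eq_one_of_mem_unitaryGroup (one_mem (unitaryGroup (Fin n) ℂ))
  rcases eq_or_ne p ⊤ with rfl | hp_top
  · simp [schattenNorm, hσ]
  · simp [schattenNorm, hσ, hp_top]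

/-- The bound `‖T‖_{p-p} ≤ n^{1-1/p}` is attained by the trace map `tr : M_n(ℂ) → ℂ`
(a 1×1 matrix being identified with a complex number, whose `p`-norm is its modulus):
`|tr(A)| ≤ n^{1-1/p} ‖A‖_p` for all `A`, and `|tr 𝟙| = n^{1-1/p} ‖𝟙‖_p = n`. -/
theorem trace_map_attains_bound (n : ℕ) (hn : 0 < n) (p : ℝ≥0∞) (hp : 1 ≤ p) :
    (∀ A : Matrix (Fin n) (Fin n) ℂ,
        ‖A.trace‖ ≤ (n : ℝ) ^ ((1 : ℝ) - 1 / p.toReal) * schattenNorm p A) ∧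
      ‖Matrix.trace (1 : Matrix (Fin n) (Fin n) ℂ)‖
        = (n : ℝ) ^ ((1 : ℝ) - 1 / p.toReal) * schattenNorm p (1 : Matrix (Fin n) (Fin n) ℂ) ∧
      ‖Matrix.trace (1 : Matrix (Fin n) (Fin n) ℂ)‖ = (n : ℝ) := by
  have h_trace_one : ‖Matrix.trace (1 : Matrix (Fin n) (Fin n) ℂ)‖ = n := by simp
  refine ⟨fun A => (norm_trace_le_sum_singularValues A).trans
    (sum_singularValues_le_schattenNorm hp A), ?_, h_trace_one⟩
  rw [h_trace_one, schattenNorm_one hn, ← Real.rpow_add (Nat.cast_pos.mpr hn), sub_add_cancel,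
    Real.rpow_one]
end

section
/- Let T : M_n(ℂ) → M_n(ℂ) be a linear map that is positive and trace preserving but not unital (T(𝟙) ≠ 𝟙), and let 1 < p ≤ ∞. Then ‖T‖_{p-p} > 1, i.e. there exists A ∈ M_n(ℂ) with ‖T(A)‖_p > ‖A‖_p (one may take A = 𝟙). -/
open scoped ENNReal ComplexOrder

/-!
`B := T 1` is positive semidefinite with trace `n` and `B ≠ 1`. For a positive semidefinite
matrix the singular values are the eigenvalues (those of `Bᴴ B = B ^ 2` are their squares), so
`‖B‖_p` is the `ℓ^p` norm of a nonnegative vector with sum `n` other than the all-ones vector,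
whose norm is `‖1‖_p`. For `p = ∞` some entry must exceed `1`; for `p < ∞`, summing Bernoulli's
inequality `x ^ p ≥ 1 + p (x - 1)`, strict for `x ≠ 1`, over the entries gives `∑ λᵢ ^ p > n`.
-/

theorem exists_one_lt_of_sum_eq_card {ι : Type*} [Fintype ι] {f : ι → ℝ}
    (hsum : ∑ i, f i = Fintype.card ι) (hf : f ≠ 1) : ∃ i, 1 < f i := by
  by_contra! hle
  obtain ⟨i₀, hi₀⟩ := Function.ne_iff.mp hf
  have := Finset.sum_lt_sum (fun i _ => hle i)
    ⟨i₀, Finset.mem_univ i₀, lt_of_le_of_ne (hle i₀) hi₀⟩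
  simp [hsum] at this

theorem card_lt_sum_rpow_of_sum_eq_card {ι : Type*} [Fintype ι] {f : ι → ℝ} (hf₀ : ∀ i, 0 ≤ f i)
    (hsum : ∑ i, f i = Fintype.card ι) (hf : f ≠ 1) {q : ℝ} (hq : 1 < q) :
    (Fintype.card ι : ℝ) < ∑ i, f i ^ q := by
  obtain ⟨i₀, hi₀⟩ := Function.ne_iff.mp hf
  have bernoulli_le (i : ι) : 1 + q * (f i - 1) ≤ f i ^ q := by
    simpa using one_add_mul_self_le_rpow_one_add (s := f i - 1) (by linarith [hf₀ i]) hq.le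
  have bernoulli_lt : 1 + q * (f i₀ - 1) < f i₀ ^ q := by
    simpa using one_add_mul_self_lt_rpow_one_add (s := f i₀ - 1) (by linarith [hf₀ i₀])
      (sub_ne_zero.mpr hi₀) hq
  calc (Fintype.card ι : ℝ) = ∑ i, (1 + q * (f i - 1)) := by
        simp [Finset.sum_add_distrib, ← Finset.mul_sum, Finset.sum_sub_distrib, hsum]
    _ < ∑ i, f i ^ q :=
        Finset.sum_lt_sum (fun i _ => bernoulli_le i) ⟨i₀, Finset.mem_univ i₀, bernoulli_lt⟩

section

open Matrix Polynomial

theorem Matrix.IsHermitian.map_eigenvalues_eq_of_charpoly_eq {𝕜 ι : Type*} [RCLike 𝕜] [Fintype ι]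
    [DecidableEq ι] {A : Matrix ι ι 𝕜} (hA : A.IsHermitian) {d : ι → ℝ}
    (h : A.charpoly = ∏ i, (X - C (d i : 𝕜))) :
    Finset.univ.val.map hA.eigenvalues = Finset.univ.val.map d := by
  have hroots := congrArg Polynomial.roots h
  rw [hA.roots_charpoly_eq_eigenvalues, Polynomial.roots_prod _ _
    (by simp [Finset.prod_ne_zero_iff, X_sub_C_ne_zero])] at hroots
  apply Multiset.map_injective (RCLike.ofReal_injective (K := 𝕜))
  simpa [Multiset.map_map] using hroots

theorem Matrix.IsHermitian.eigenvalues_one {𝕜 ι : Type*} [RCLike 𝕜] [Fintype ι]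
    [DecidableEq ι] (h : (1 : Matrix ι ι 𝕜).IsHermitian) : h.eigenvalues = 1 := by
  ext i
  simp [h.eigenvalues_eq, dotProduct_comm, ← EuclideanSpace.inner_eq_star_dotProduct]

theorem Matrix.PosSemidef.map_singularValues_eq {n : ℕ} {B : Matrix (Fin n) (Fin n) ℂ}
    (hB : B.PosSemidef) :
    Finset.univ.val.map (singularValues B) = Finset.univ.val.map hB.1.eigenvalues := by
  have hcharpoly : (Bᴴ * B).charpoly = ∏ i, (X - C ((hB.1.eigenvalues i ^ 2 : ℝ) : ℂ)) := by
    rw [hB.1.eq, ← pow_two, ← cfc_pow_id (R := ℝ) B 2 hB.1.isSelfAdjoint]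
    exact hB.1.charpoly_cfc_eq _
  have hsq := (posSemidef_conjTranspose_mul_self B).isHermitian.map_eigenvalues_eq_of_charpoly_eq
    hcharpoly
  calc Finset.univ.val.map (singularValues B)
      = (Finset.univ.val.map (posSemidef_conjTranspose_mul_self B).isHermitian.eigenvalues).map
          Real.sqrt := by rw [Multiset.map_map]; rfl
    _ = Finset.univ.val.map hB.1.eigenvalues := by
      rw [hsq, Multiset.map_map]
      exact Multiset.map_congr rfl fun i _ => Real.sqrt_sq (hB.eigenvalues_nonneg i)

theorem schattenNorm_of_posSemidef {n : ℕ} (p : ℝ≥0∞) {B : Matrix (Fin n) (Fin n) ℂ}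
    (hB : B.PosSemidef) :
    schattenNorm p B = if p = ⊤ then ⨆ i, hB.1.eigenvalues i
      else (∑ i, hB.1.eigenvalues i ^ p.toReal) ^ (1 / p.toReal) := by
  have hmap := hB.map_singularValues_eq
  have hrange : Set.range (singularValues B) = Set.range hB.1.eigenvalues := by
    ext x
    simpa using congrArg (x ∈ ·) hmap
  have hsum : ∑ i, singularValues B i ^ p.toReal = ∑ i, hB.1.eigenvalues i ^ p.toReal := by
    have := congrArg (fun m : Multiset ℝ => (m.map (· ^ p.toReal)).sum) hmap
    simp only [Multiset.map_map, Function.comp_def] at this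
    exact this
  simp only [schattenNorm, iSup, hrange, hsum]

theorem schattenNorm_one_lt_of_posSemidef {n : ℕ} {p : ℝ≥0∞} (hp : 1 < p)
    {B : Matrix (Fin n) (Fin n) ℂ} (hB : B.PosSemidef) (htr : B.trace = n) (hne : B ≠ 1) :
    schattenNorm p (1 : Matrix (Fin n) (Fin n) ℂ) < schattenNorm p B := by
  set μ := hB.1.eigenvalues with hμ
  have hsum : ∑ i, μ i = Fintype.card (Fin n) := by
    have := hB.1.trace_eq_sum_eigenvalues
    rw [htr] at this
    simpa using (congrArg Complex.re this).symm
  have hμ1 : μ ≠ 1 := fun h => hne (by rw [hB.1.spectral_theorem, ← hμ, h]; simp)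
  rw [schattenNorm_of_posSemidef p hB, schattenNorm_of_posSemidef p PosSemidef.one,
    PosSemidef.one.1.eigenvalues_one]
  split_ifs with hptop
  · obtain ⟨j, hj⟩ := exists_one_lt_of_sum_eq_card hsum hμ1
    have : Nonempty (Fin n) := ⟨j⟩
    simpa using hj.trans_le (le_ciSup (Set.finite_range _).bddAbove j)
  · have hq : 1 < p.toReal := by
      simpa using (ENNReal.toReal_lt_toReal ENNReal.one_ne_top hptop).mpr hp
    have := card_lt_sum_rpow_of_sum_eq_card hB.eigenvalues_nonneg hsum hμ1 hq
    simp only [Pi.one_apply, Real.one_rpow, Finset.sum_const, Finset.card_univ]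
    exact Real.rpow_lt_rpow (by positivity) (by simpa using this) (by positivity)

end

/-- If `T : M_n(ℂ) → M_n(ℂ)` is positive and trace preserving but not unital, and
`1 < p ≤ ∞`, then `‖T‖_{p-p} > 1`: there is an `A` with `‖T(A)‖_p > ‖A‖_p`, and one may
take `A = 𝟙`. -/
theorem schattenNorm_not_contractive_of_not_unital
    (n : ℕ) (T : Matrix (Fin n) (Fin n) ℂ →ₗ[ℂ] Matrix (Fin n) (Fin n) ℂ)
    (hTpos : IsPositiveMatrixMap T) (hTtr : IsTracePreservingMap T)
    (hTnotunital : T 1 ≠ 1) (p : ℝ≥0∞) (hp : 1 < p) :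
    (∃ A : Matrix (Fin n) (Fin n) ℂ, schattenNorm p A < schattenNorm p (T A)) ∧
      schattenNorm p (1 : Matrix (Fin n) (Fin n) ℂ) < schattenNorm p (T 1) := by
  have key : schattenNorm p (1 : Matrix (Fin n) (Fin n) ℂ) < schattenNorm p (T 1) :=
    schattenNorm_one_lt_of_posSemidef hp (hTpos 1 Matrix.PosSemidef.one)
      (by simp [hTtr 1]) hTnotunital
  exact ⟨⟨1, key⟩, key⟩
end

section
/- Let T : M_n(ℂ) → M_n(ℂ) be a linear map that is positive, trace preserving and unital, and let T* be its adjoint with respect to the Hilbert–Schmidt inner product ⟨A, B⟩ = tr(A*B) on M_n(ℂ). Then the positive semi-definite operator T* ∘ T on the Hilbert space M_n(ℂ) has operator norm exactly 1: 𝟙 is an eigenvector of T* ∘ T with eigenvalue 1, and every eigenvalue of T* ∘ T is at most 1. Consequently ‖T(A)‖_2 ≤ ‖A‖_2 for all A. -/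
open scoped ENNReal ComplexOrder Matrix

/-! For Hermitian `H = ∑ λᵢ Eᵢ` (spectral projections), the matrices `Pᵢ = T Eᵢ` are positive
with `∑ Pᵢ = 1` and `tr Pᵢ = 1`. For `X = T H = ∑ λᵢ Pᵢ` the identity
`∑ (λᵢ - X) Pᵢ (λᵢ - X) = ∑ λᵢ² Pᵢ - X²` exhibits `∑ λᵢ² Pᵢ - X²` as a positive matrix, so
`tr (T H)² ≤ ∑ λᵢ² = tr H²`. A general `A` is `P + i Q` with `P`, `Q` Hermitian, and
`‖P + i Q‖₂² = ‖P‖₂² + ‖Q‖₂²`, so `T` is a Hilbert–Schmidt contraction. The eigenvalue bound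
follows from `c ‖G‖₂² = ⟨G, T* T G⟩ = ‖T G‖₂² ≤ ‖G‖₂²`, and `T* 𝟙 = 𝟙` is the dual statement of
trace preservation. -/

open Matrix

namespace Matrix.IsHermitian

variable {𝕜 m : Type*} [RCLike 𝕜] [Fintype m] [DecidableEq m] {H : Matrix m m 𝕜}
  (hH : H.IsHermitian)

noncomputable def eigenprojection (i : m) : Matrix m m 𝕜 :=
  Unitary.conjStarAlgAut 𝕜 _ hH.eigenvectorUnitary (single i i 1)

lemma posSemidef_eigenprojection (i : m) : (hH.eigenprojection i).PosSemidef := by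
  rw [eigenprojection, Unitary.conjStarAlgAut_apply, star_eq_conjTranspose]
  refine PosSemidef.mul_mul_conjTranspose_same ?_ _
  rw [← diagonal_single]
  exact PosSemidef.diagonal (Pi.single_nonneg.mpr zero_le_one)

lemma trace_eigenprojection (i : m) : (hH.eigenprojection i).trace = 1 := by
  rw [eigenprojection, Unitary.conjStarAlgAut_apply, trace_mul_cycle, Unitary.coe_star_mul_self,
    one_mul, trace_single_eq_same]

lemma sum_eigenprojection : ∑ i, hH.eigenprojection i = 1 := by
  simp only [eigenprojection, ← map_sum, sum_single_one, map_one]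

lemma eq_sum_eigenvalues_smul_eigenprojection :
    H = ∑ i, hH.eigenvalues i • hH.eigenprojection i := by
  conv_lhs => rw [hH.spectral_theorem, ← sum_single_eq_diagonal]
  simp only [eigenprojection, map_sum]
  refine Finset.sum_congr rfl fun i _ => ?_
  rw [RCLike.real_smul_eq_coe_smul (K := 𝕜), ← map_smul, smul_single, smul_eq_mul, mul_one,
    Function.comp_apply]

lemma trace_mul_self_eq_sum_sq_eigenvalues :
    (H * H).trace = ∑ i, ((hH.eigenvalues i ^ 2 : ℝ) : 𝕜) := by
  conv_lhs => rw [hH.spectral_theorem, ← map_mul, Unitary.conjStarAlgAut_apply, trace_mul_cycle,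
    Unitary.coe_star_mul_self, one_mul, diagonal_mul_diagonal, trace_diagonal]
  simp [pow_two]

end Matrix.IsHermitian

theorem sum_smul_one_sub_mul_mul_smul_one_sub {ι K R : Type*} [Fintype ι] [CommSemiring K]
    [Ring R] [Module K R] [IsScalarTower K R R] [SMulCommClass K R R] {P : ι → R}
    (hP : ∑ i, P i = 1) (c : ι → K) {X : R} (hX : ∑ i, c i • P i = X) :
    ∑ i, (c i • 1 - X) * P i * (c i • 1 - X) = ∑ i, c i ^ 2 • P i - X * X := by
  have expand : ∀ i, (c i • 1 - X) * P i * (c i • 1 - X) =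
      c i ^ 2 • P i - c i • P i * X - X * c i • P i + X * P i * X := fun i => by
    simp only [sub_mul, mul_sub, smul_mul_assoc, mul_smul_comm, one_mul, mul_one, smul_sub,
      smul_smul, pow_two]
    abel
  simp only [expand, Finset.sum_add_distrib, Finset.sum_sub_distrib, ← Finset.sum_mul,
    ← Finset.mul_sum, hX, hP, mul_one]
  abel

namespace Matrix

theorem trace_mul_self_le_of_sum_eq_one {𝕜 m ι : Type*} [RCLike 𝕜] [Fintype m] [DecidableEq m]
    [Fintype ι] {P : ι → Matrix m m 𝕜} (hP : ∀ i, (P i).PosSemidef) (hsum : ∑ i, P i = 1)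
    (c : ι → ℝ) :
    ((∑ i, c i • P i) * ∑ i, c i • P i).trace ≤ ∑ i, ((c i ^ 2 : ℝ) : 𝕜) * (P i).trace := by
  set X := ∑ i, c i • P i with hX
  have hXh : X.IsHermitian := by
    simp only [IsHermitian, hX, conjTranspose_sum, conjTranspose_smul, star_trivial,
      (hP _).isHermitian.eq]
  have hdev : ∀ i, (c i • 1 - X).IsHermitian := fun i =>
    (isHermitian_one.smul (IsSelfAdjoint.all _)).sub hXh
  have hnonneg : 0 ≤ (∑ i, c i ^ 2 • P i - X * X).trace := by
    rw [← sum_smul_one_sub_mul_mul_smul_one_sub hsum c hX.symm, trace_sum]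
    refine Finset.sum_nonneg fun i _ => ?_
    have hconj := (hP i).conjTranspose_mul_mul_same (c i • 1 - X)
    rw [(hdev i).eq] at hconj
    exact hconj.trace_nonneg
  rw [trace_sub, sub_nonneg, trace_sum] at hnonneg
  simpa only [trace_smul, RCLike.real_smul_eq_coe_mul] using hnonneg

theorem ext_of_forall_trace_conjTranspose_mul_eq {m p R : Type*} [Fintype m] [Fintype p]
    [PartialOrder R] [Ring R] [StarRing R] [StarOrderedRing R] [NoZeroDivisors R]
    {X Y : Matrix m p R} (h : ∀ A : Matrix m p R, (Aᴴ * X).trace = (Aᴴ * Y).trace) : X = Y := by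
  rw [← sub_eq_zero, ← trace_conjTranspose_mul_self_eq_zero_iff, Matrix.mul_sub, trace_sub, h,
    sub_self]

theorem trace_conjTranspose_add_I_smul_mul_add_I_smul {m : Type*} [Fintype m]
    {P Q : Matrix m m ℂ} (hP : P.IsHermitian) (hQ : Q.IsHermitian) :
    ((P + Complex.I • Q)ᴴ * (P + Complex.I • Q)).trace = (P * P).trace + (Q * Q).trace := by
  rw [conjTranspose_add, conjTranspose_smul, hP.eq, hQ.eq, Complex.star_def, Complex.conj_I]
  simp only [add_mul, mul_add, Matrix.smul_mul, Matrix.mul_smul, trace_add, trace_smul,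
    smul_eq_mul]
  linear_combination Complex.I * trace_mul_comm P Q - (Q * Q).trace * Complex.I_mul_I

end Matrix

namespace IsPositiveMatrixMap

variable {n r : ℕ} {T : Matrix (Fin n) (Fin n) ℂ →ₗ[ℂ] Matrix (Fin r) (Fin r) ℂ}

theorem isHermitian_map (hT : IsPositiveMatrixMap T) {H : Matrix (Fin n) (Fin n) ℂ}
    (hH : H.IsHermitian) : (T H).IsHermitian := by
  rw [hH.eq_sum_eigenvalues_smul_eigenprojection, map_sum]
  simp only [IsHermitian, conjTranspose_sum, LinearMap.map_smul_of_tower, conjTranspose_smul,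
    star_trivial, (hT _ (hH.posSemidef_eigenprojection _)).isHermitian.eq]

theorem trace_map_mul_self_le (hT : IsPositiveMatrixMap T) (htr : IsTracePreservingMap T)
    (hunital : T 1 = 1) {H : Matrix (Fin n) (Fin n) ℂ} (hH : H.IsHermitian) :
    (T H * T H).trace ≤ (H * H).trace := by
  set P := fun i => T (hH.eigenprojection i)
  have hTH : T H = ∑ i, hH.eigenvalues i • P i := by
    conv_lhs => rw [hH.eq_sum_eigenvalues_smul_eigenprojection]
    simp only [map_sum, LinearMap.map_smul_of_tower, P]
  have hPsum : ∑ i, P i = 1 := by rw [← map_sum, hH.sum_eigenprojection, hunital]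
  have hPtr : ∀ i, (P i).trace = 1 := fun i => by rw [htr, hH.trace_eigenprojection]
  calc (T H * T H).trace
      ≤ ∑ i, ((hH.eigenvalues i ^ 2 : ℝ) : ℂ) * (P i).trace := by
        rw [hTH]
        exact trace_mul_self_le_of_sum_eq_one (fun i => hT _ (hH.posSemidef_eigenprojection i))
          hPsum _
    _ = (H * H).trace := by
        simp [hPtr, hH.trace_mul_self_eq_sum_sq_eigenvalues]

theorem trace_conjTranspose_map_mul_map_le (hT : IsPositiveMatrixMap T)
    (htr : IsTracePreservingMap T) (hunital : T 1 = 1) (A : Matrix (Fin n) (Fin n) ℂ) :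
    ((T A)ᴴ * T A).trace ≤ (Aᴴ * A).trace := by
  set P : Matrix (Fin n) (Fin n) ℂ := ↑(realPart A)
  set Q : Matrix (Fin n) (Fin n) ℂ := ↑(imaginaryPart A)
  have hA : A = P + Complex.I • Q := (realPart_add_I_smul_imaginaryPart A).symm
  have hP : P.IsHermitian := (realPart A).2
  have hQ : Q.IsHermitian := (imaginaryPart A).2
  have hTA : T A = T P + Complex.I • T Q := by rw [hA, map_add, map_smul]
  calc ((T A)ᴴ * T A).trace = (T P * T P).trace + (T Q * T Q).trace := by
        rw [hTA, trace_conjTranspose_add_I_smul_mul_add_I_smul (hT.isHermitian_map hP)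
          (hT.isHermitian_map hQ)]
    _ ≤ (P * P).trace + (Q * Q).trace :=
        add_le_add (hT.trace_map_mul_self_le htr hunital hP)
          (hT.trace_map_mul_self_le htr hunital hQ)
    _ = (Aᴴ * A).trace := by
        conv_rhs => rw [hA, trace_conjTranspose_add_I_smul_mul_add_I_smul hP hQ]

end IsPositiveMatrixMap

theorem schattenNorm_two_eq_sqrt {n : ℕ} (A : Matrix (Fin n) (Fin n) ℂ) :
    schattenNorm 2 A = √(Aᴴ * A).trace.re := by
  rw [schattenNorm, if_neg ENNReal.ofNat_ne_top, ENNReal.toReal_ofNat, ← Real.sqrt_eq_rpow,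
    (posSemidef_conjTranspose_mul_self A).isHermitian.trace_eq_sum_eigenvalues]
  simp [singularValues, Real.sq_sqrt (eigenvalues_conjTranspose_mul_self_nonneg A _)]

/-- Let `T : M_n(ℂ) → M_n(ℂ)` be positive, trace preserving and unital, and let `S = T*` be
its adjoint for the Hilbert–Schmidt inner product `⟨A, B⟩ = tr(A* B)`.  Then `T* ∘ T` has
operator norm exactly `1`: `𝟙` is an eigenvector with eigenvalue `1`, every eigenvalue is
at most `1`, and consequently `‖T(A)‖₂ ≤ ‖A‖₂` for all `A`. -/
theorem adjoint_comp_self_norm_one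
    (n : ℕ) (T S : Matrix (Fin n) (Fin n) ℂ →ₗ[ℂ] Matrix (Fin n) (Fin n) ℂ)
    (hTpos : IsPositiveMatrixMap T) (hTtr : IsTracePreservingMap T) (hTunital : T 1 = 1)
    (hadj : ∀ A B : Matrix (Fin n) (Fin n) ℂ,
      ((T A)ᴴ * B).trace = (Aᴴ * S B).trace) :
    S (T 1) = 1 ∧
      (∀ (c : ℝ) (G : Matrix (Fin n) (Fin n) ℂ), G ≠ 0 → S (T G) = (c : ℂ) • G → c ≤ 1) ∧
      ∀ A : Matrix (Fin n) (Fin n) ℂ, schattenNorm 2 (T A) ≤ schattenNorm 2 A := by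
  have hcontr := hTpos.trace_conjTranspose_map_mul_map_le hTtr hTunital
  refine ⟨?_, fun c G hG hSTG => ?_, fun A => ?_⟩
  · rw [hTunital]
    refine ext_of_forall_trace_conjTranspose_mul_eq fun A => ?_
    rw [← hadj, mul_one, mul_one, trace_conjTranspose, hTtr, ← trace_conjTranspose]
  · have hGpos : 0 < (Gᴴ * G).trace :=
      (posSemidef_conjTranspose_mul_self G).trace_nonneg.lt_of_ne
        (Ne.symm (trace_conjTranspose_mul_self_eq_zero_iff.not.mpr hG))
    have hle : (c : ℂ) * (Gᴴ * G).trace ≤ 1 * (Gᴴ * G).trace :=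
      calc (c : ℂ) * (Gᴴ * G).trace = (Gᴴ * S (T G)).trace := by
            rw [hSTG, Matrix.mul_smul, trace_smul, smul_eq_mul]
        _ = ((T G)ᴴ * T G).trace := (hadj G (T G)).symm
        _ ≤ 1 * (Gᴴ * G).trace := (hcontr G).trans_eq (one_mul _).symm
    exact_mod_cast le_of_mul_le_mul_right hle hGpos
  · rw [schattenNorm_two_eq_sqrt, schattenNorm_two_eq_sqrt]
    exact Real.sqrt_le_sqrt (Complex.re_le_re (hcontr A))
end

section
/- Let n be even, 1 ≤ p ≤ ∞, and let T : M_n(ℂ) → M_n(ℂ) be a positive trace preserving linear map. Then for every Hermitian A ∈ M_n(ℂ) with tr A = 0, ‖T(A)‖_p ≤ (n/2)^{1-1/p} ‖A‖_p. -/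
open scoped ENNReal ComplexOrder

/-!
Decompose `A = A⁺ - A⁻`; tracelessness gives `tr A⁺ = tr A⁻ = t` with `2t = ‖A‖₁`. Then
`T A = P - Q` with `P, Q ≥ 0` of trace `t`, and testing `T A` against its spectral projections
onto the positive and the negative eigenvalues shows that the positive eigenvalues of `T A`, and
the moduli of the negative ones, each sum to at most `t`. So every eigenvalue `μ` of `T A` has
`|μ| ≤ t` while `∑ |μ| ≤ 2t`, whence `‖T A‖_p ^ p ≤ t ^ (p - 1) · 2t`, i.e. `‖T A‖_p ≤ 2 ^ (1/p) t`.
Finally Hölder gives `2t = ‖A‖₁ ≤ n ^ (1 - 1/p) ‖A‖_p`, and `2 ^ (1/p) / 2 = 2 ^ (-(1 - 1/p))`.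
-/

section RealVectors

variable {ι : Type*} [Fintype ι]

theorem Real.sum_le_card_rpow_mul_sum_rpow {f : ι → ℝ} (hf : ∀ i, 0 ≤ f i) {q : ℝ} (hq : 1 ≤ q) :
    ∑ i, f i ≤ (Fintype.card ι : ℝ) ^ (1 - 1 / q) * (∑ i, f i ^ q) ^ (1 / q) := by
  have hq0 : q ≠ 0 := (zero_lt_one.trans_le hq).ne'
  have hsum : 0 ≤ ∑ i, f i := Finset.sum_nonneg fun i _ => hf i
  have hholder := Real.rpow_sum_le_const_mul_sum_rpow_of_nonneg Finset.univ hq fun i _ => hf i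
  calc ∑ i, f i = ((∑ i, f i) ^ q) ^ (1 / q) := by rw [one_div, Real.rpow_rpow_inv hsum hq0]
    _ ≤ ((Fintype.card ι : ℝ) ^ (q - 1) * ∑ i, f i ^ q) ^ (1 / q) := by
        gcongr
        simpa using hholder
    _ = (Fintype.card ι : ℝ) ^ (1 - 1 / q) * (∑ i, f i ^ q) ^ (1 / q) := by
        rw [Real.mul_rpow (by positivity) (Finset.sum_nonneg fun i _ => Real.rpow_nonneg (hf i) q),
          ← Real.rpow_mul (by positivity)]
        congr 2
        field_simp

variable {μ : ι → ℝ} {t : ℝ}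

theorem abs_le_of_sum_posPart_le_of_sum_negPart_le (hpos : ∑ i, (μ i)⁺ ≤ t)
    (hneg : ∑ i, (μ i)⁻ ≤ t) (i : ι) : |μ i| ≤ t := by
  rcases le_total 0 (μ i) with h | h
  · calc |μ i| = (μ i)⁺ := by rw [abs_of_nonneg h, posPart_eq_self.mpr h]
      _ ≤ ∑ j, (μ j)⁺ := Finset.single_le_sum (fun j _ => posPart_nonneg (μ j)) (Finset.mem_univ i)
      _ ≤ t := hpos
  · calc |μ i| = (μ i)⁻ := by rw [abs_of_nonpos h, negPart_eq_neg.mpr h]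
      _ ≤ ∑ j, (μ j)⁻ := Finset.single_le_sum (fun j _ => negPart_nonneg (μ j)) (Finset.mem_univ i)
      _ ≤ t := hneg

theorem sum_negPart_eq_sum_posPart_of_sum_eq_zero (h : ∑ i, μ i = 0) :
    ∑ i, (μ i)⁻ = ∑ i, (μ i)⁺ := by
  rw [← Finset.sum_congr rfl fun i _ => posPart_sub_negPart (μ i), Finset.sum_sub_distrib,
    sub_eq_zero] at h
  exact h.symm

theorem sum_abs_rpow_le_of_sum_posPart_le_of_sum_negPart_le {q : ℝ} (hq : 1 ≤ q)
    (hpos : ∑ i, (μ i)⁺ ≤ t) (hneg : ∑ i, (μ i)⁻ ≤ t) :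
    ∑ i, |μ i| ^ q ≤ 2 * t ^ q := by
  have ht : 0 ≤ t := (Finset.sum_nonneg fun i _ => posPart_nonneg (μ i)).trans hpos
  have hsplit (x : ℝ) (hx : 0 ≤ x) : x ^ q = x ^ (q - 1) * x := by
    rw [← Real.rpow_add_one' hx (by linarith), sub_add_cancel]
  calc ∑ i, |μ i| ^ q = ∑ i, |μ i| ^ (q - 1) * |μ i| :=
        Finset.sum_congr rfl fun i _ => hsplit _ (abs_nonneg _)
    _ ≤ ∑ i, t ^ (q - 1) * |μ i| := by
        gcongr with i
        exact abs_le_of_sum_posPart_le_of_sum_negPart_le hpos hneg i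
    _ = t ^ (q - 1) * (∑ i, (μ i)⁺ + ∑ i, (μ i)⁻) := by
        simp only [← Finset.mul_sum, ← Finset.sum_add_distrib, posPart_add_negPart]
    _ ≤ t ^ (q - 1) * (t + t) := by gcongr
    _ = 2 * t ^ q := by rw [hsplit t ht]; ring

end RealVectors

namespace Matrix

variable {𝕜 ι : Type*} [RCLike 𝕜] [Fintype ι] [DecidableEq ι]

open scoped MatrixOrder

theorem PosSemidef.trace_mul_nonneg {P Q : Matrix ι ι 𝕜} (hP : P.PosSemidef) (hQ : Q.PosSemidef) :
    0 ≤ (P * Q).trace := by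
  obtain ⟨X, rfl⟩ := CStarAlgebra.nonneg_iff_eq_star_mul_self.mp hP.nonneg
  rw [star_eq_conjTranspose, ← trace_mul_cycle]
  exact (hQ.mul_mul_conjTranspose_same X).trace_nonneg

theorem re_trace_mul_sub_le {W P Q : Matrix ι ι 𝕜} (hW₀ : 0 ≤ W) (hW₁ : W ≤ 1)
    (hP : P.PosSemidef) (hQ : Q.PosSemidef) :
    RCLike.re (W * (P - Q)).trace ≤ RCLike.re P.trace := by
  have hWP := (RCLike.nonneg_iff.mp ((le_iff.mp hW₁).trace_mul_nonneg hP)).1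
  have hWQ := (RCLike.nonneg_iff.mp ((nonneg_iff_posSemidef.mp hW₀).trace_mul_nonneg hQ)).1
  rw [sub_mul, one_mul, trace_sub, map_sub] at hWP
  rw [mul_sub, trace_sub, map_sub]
  linarith

theorem IsHermitian.trace_cfc {A : Matrix ι ι 𝕜} (hA : A.IsHermitian) (f : ℝ → ℝ) :
    (cfc f A).trace = ∑ i, (f (hA.eigenvalues i) : 𝕜) := by
  rw [hA.cfc_eq, IsHermitian.cfc, Unitary.conjStarAlgAut_apply, trace_mul_cycle,
    Unitary.coe_star_mul_self, one_mul, trace_diagonal]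
  rfl

theorem IsHermitian.re_trace_cfc_mul_self {B : Matrix ι ι 𝕜} (hB : B.IsHermitian) (w : ℝ → ℝ) :
    RCLike.re (cfc w B * B).trace = ∑ i, w (hB.eigenvalues i) * hB.eigenvalues i := by
  have hcont (f : ℝ → ℝ) : ContinuousOn f (spectrum ℝ B) := B.finite_real_spectrum.continuousOn f
  have hmul : cfc w B * B = cfc (fun x => w x * x) B := by
    rw [cfc_mul w (fun x => x) B (hcont _) (hcont _), cfc_id' ℝ B]
  rw [hmul, hB.trace_cfc]
  simp

theorem IsHermitian.sum_posPart_eigenvalues_le {B P Q : Matrix ι ι 𝕜} (hB : B.IsHermitian)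
    (hP : P.PosSemidef) (hQ : Q.PosSemidef) (hBPQ : B = P - Q) :
    ∑ i, (hB.eigenvalues i)⁺ ≤ RCLike.re P.trace := by
  let W := cfc (fun x : ℝ => if 0 < x then 1 else 0) B
  have hW₀ : 0 ≤ W := cfc_nonneg fun x _ => by split_ifs <;> norm_num
  have hW₁ : W ≤ 1 := cfc_le_one _ _ fun x _ => by split_ifs <;> norm_num
  calc ∑ i, (hB.eigenvalues i)⁺ = RCLike.re (W * B).trace := by
        rw [hB.re_trace_cfc_mul_self]
        refine Finset.sum_congr rfl fun i _ => ?_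
        split_ifs with h
        · simp [posPart_eq_self.mpr h.le]
        · simp [posPart_eq_zero.mpr (not_lt.mp h)]
    _ ≤ RCLike.re P.trace := hBPQ ▸ re_trace_mul_sub_le hW₀ hW₁ hP hQ

theorem IsHermitian.sum_negPart_eigenvalues_le {B P Q : Matrix ι ι 𝕜} (hB : B.IsHermitian)
    (hP : P.PosSemidef) (hQ : Q.PosSemidef) (hBPQ : B = P - Q) :
    ∑ i, (hB.eigenvalues i)⁻ ≤ RCLike.re Q.trace := by
  let W := cfc (fun x : ℝ => if x < 0 then 1 else 0) B
  have hW₀ : 0 ≤ W := cfc_nonneg fun x _ => by split_ifs <;> norm_num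
  have hW₁ : W ≤ 1 := cfc_le_one _ _ fun x _ => by split_ifs <;> norm_num
  calc ∑ i, (hB.eigenvalues i)⁻ = RCLike.re (W * (Q - P)).trace := by
        rw [← neg_sub, ← hBPQ, mul_neg, trace_neg, map_neg, hB.re_trace_cfc_mul_self,
          ← Finset.sum_neg_distrib]
        refine Finset.sum_congr rfl fun i _ => ?_
        split_ifs with h
        · simp [negPart_eq_neg.mpr h.le]
        · simp [negPart_eq_zero.mpr (not_lt.mp h)]
    _ ≤ RCLike.re Q.trace := re_trace_mul_sub_le hW₀ hW₁ hQ hP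

theorem IsHermitian.re_trace_posPart {A : Matrix ι ι 𝕜} (hA : A.IsHermitian) :
    RCLike.re (A⁺).trace = ∑ i, (hA.eigenvalues i)⁺ := by
  rw [CFC.posPart_def, cfcₙ_eq_cfc, hA.trace_cfc]
  simp

theorem IsHermitian.re_trace_negPart {A : Matrix ι ι 𝕜} (hA : A.IsHermitian) :
    RCLike.re (A⁻).trace = ∑ i, (hA.eigenvalues i)⁻ := by
  rw [CFC.negPart_def, cfcₙ_eq_cfc, hA.trace_cfc]
  simp

theorem posSemidef_posPart (A : Matrix ι ι 𝕜) : (A⁺).PosSemidef :=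
  nonneg_iff_posSemidef.mp (CFC.posPart_nonneg A)

theorem posSemidef_negPart (A : Matrix ι ι 𝕜) : (A⁻).PosSemidef :=
  nonneg_iff_posSemidef.mp (CFC.negPart_nonneg A)

end Matrix

namespace Matrix.IsHermitian

variable {n : ℕ} {A : Matrix (Fin n) (Fin n) ℂ}

theorem map_singularValues (hA : A.IsHermitian) :
    Multiset.map (singularValues A) Finset.univ.val =
      Multiset.map (fun i => |hA.eigenvalues i|) Finset.univ.val := by
  have hM := (posSemidef_conjTranspose_mul_self A).isHermitian
  have hsq : Aᴴ * A = cfc (fun x : ℝ => x ^ 2) A := by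
    rw [cfc_pow_id A 2 hA.isSelfAdjoint, hA.eq, sq]
  have hroots : Multiset.map (Complex.ofReal ∘ hM.eigenvalues) Finset.univ.val =
      Multiset.map (Complex.ofReal ∘ fun i => hA.eigenvalues i ^ 2) Finset.univ.val :=
    calc _ = (Aᴴ * A).charpoly.roots := hM.roots_charpoly_eq_eigenvalues.symm
      _ = (cfc (fun x : ℝ => x ^ 2) A).charpoly.roots := by rw [hsq]
      _ = _ := by
        rw [hA.charpoly_cfc_eq, Polynomial.roots_prod _ _ (Finset.prod_ne_zero_iff.mpr
          fun i _ => Polynomial.X_sub_C_ne_zero _)]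
        simp only [Polynomial.roots_X_sub_C]
        simp
  have hsq_eig : Multiset.map hM.eigenvalues Finset.univ.val =
      Multiset.map (fun i => hA.eigenvalues i ^ 2) Finset.univ.val := by
    apply Multiset.map_injective Complex.ofReal_injective
    rwa [Multiset.map_map, Multiset.map_map]
  calc Multiset.map (singularValues A) Finset.univ.val
      = Multiset.map Real.sqrt (Multiset.map hM.eigenvalues Finset.univ.val) := by
        rw [Multiset.map_map]; rfl
    _ = Multiset.map (fun i => |hA.eigenvalues i|) Finset.univ.val := by
        simp [hsq_eig, Function.comp_def, Real.sqrt_sq_eq_abs]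

theorem schattenNorm_of_ne_top (hA : A.IsHermitian) {p : ℝ≥0∞} (hp : p ≠ ⊤) :
    schattenNorm p A = (∑ i, |hA.eigenvalues i| ^ p.toReal) ^ (1 / p.toReal) := by
  have := congrArg (fun s => (s.map (· ^ p.toReal)).sum) hA.map_singularValues
  simp only [Multiset.map_map] at this
  rw [schattenNorm, if_neg hp, Finset.sum_eq_multiset_sum, Finset.sum_eq_multiset_sum]
  exact congrArg (· ^ (1 / p.toReal)) this

theorem schattenNorm_top (hA : A.IsHermitian) :
    schattenNorm ⊤ A = ⨆ i, |hA.eigenvalues i| := by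
  have hrange : Set.range (singularValues A) = Set.range fun i => |hA.eigenvalues i| := by
    ext x
    simpa [Multiset.mem_map] using congrArg (x ∈ ·) hA.map_singularValues
  rw [schattenNorm, if_pos rfl, ← sSup_range, hrange, sSup_range]

variable {p : ℝ≥0∞}

-- At `p = ⊤` we have `p.toReal = 0`, so the exponents `1 / p.toReal` and `1 - 1 / p.toReal`
-- below become `0` and `1`.
theorem schattenNorm_le_of_sum_posPart_le_of_sum_negPart_le (hA : A.IsHermitian) (hp : 1 ≤ p)
    {t : ℝ} (hpos : ∑ i, (hA.eigenvalues i)⁺ ≤ t) (hneg : ∑ i, (hA.eigenvalues i)⁻ ≤ t) :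
    schattenNorm p A ≤ 2 ^ (1 / p.toReal) * t := by
  have ht : 0 ≤ t := (Finset.sum_nonneg fun i _ => posPart_nonneg _).trans hpos
  by_cases hp_top : p = ⊤
  · subst hp_top
    rw [hA.schattenNorm_top, ENNReal.toReal_top, div_zero, Real.rpow_zero, one_mul]
    exact Real.iSup_le (abs_le_of_sum_posPart_le_of_sum_negPart_le hpos hneg) ht
  · have hq : 1 ≤ p.toReal := ENNReal.toReal_mono hp_top hp
    rw [hA.schattenNorm_of_ne_top hp_top]
    calc (∑ i, |hA.eigenvalues i| ^ p.toReal) ^ (1 / p.toReal)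
        ≤ (2 * t ^ p.toReal) ^ (1 / p.toReal) := by
          gcongr
          exact sum_abs_rpow_le_of_sum_posPart_le_of_sum_negPart_le hq hpos hneg
      _ = 2 ^ (1 / p.toReal) * t := by
          rw [Real.mul_rpow zero_le_two (by positivity), ← Real.rpow_mul ht,
            mul_one_div_cancel (by positivity), Real.rpow_one]

theorem sum_abs_eigenvalues_le_schattenNorm (hA : A.IsHermitian) (hp : 1 ≤ p) :
    ∑ i, |hA.eigenvalues i| ≤ (n : ℝ) ^ (1 - 1 / p.toReal) * schattenNorm p A := by
  by_cases hp_top : p = ⊤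
  · subst hp_top
    rw [hA.schattenNorm_top, ENNReal.toReal_top, div_zero, sub_zero, Real.rpow_one]
    simpa using Finset.sum_le_card_nsmul Finset.univ _ _ fun i _ =>
      le_ciSup (Set.finite_range fun i => |hA.eigenvalues i|).bddAbove i
  · rw [hA.schattenNorm_of_ne_top hp_top]
    simpa using Real.sum_le_card_rpow_mul_sum_rpow (fun i => abs_nonneg (hA.eigenvalues i))
      (ENNReal.toReal_mono hp_top hp)

end Matrix.IsHermitian

section PositiveMap

variable {n r : ℕ} {T : Matrix (Fin n) (Fin n) ℂ →ₗ[ℂ] Matrix (Fin r) (Fin r) ℂ}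
  {A : Matrix (Fin n) (Fin n) ℂ}

theorem map_eq_map_posPart_sub_map_negPart (hA : A.IsHermitian) : T A = T A⁺ - T A⁻ := by
  rw [← map_sub, CFC.posPart_sub_negPart A hA.isSelfAdjoint]

theorem IsPositiveMatrixMap.isHermitian_map_s10 (hT : IsPositiveMatrixMap T) (hA : A.IsHermitian) :
    (T A).IsHermitian := by
  rw [map_eq_map_posPart_sub_map_negPart hA]
  exact (hT _ A.posSemidef_posPart).isHermitian.sub
    (hT _ A.posSemidef_negPart).isHermitian

theorem IsPositiveMatrixMap.sum_posPart_eigenvalues_map_le (hT : IsPositiveMatrixMap T)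
    (hTtr : IsTracePreservingMap T) (hA : A.IsHermitian) (hTA : (T A).IsHermitian) :
    ∑ i, (hTA.eigenvalues i)⁺ ≤ ∑ i, (hA.eigenvalues i)⁺ := by
  have := hTA.sum_posPart_eigenvalues_le (hT _ A.posSemidef_posPart)
    (hT _ A.posSemidef_negPart) (map_eq_map_posPart_sub_map_negPart hA)
  rwa [hTtr, hA.re_trace_posPart] at this

theorem IsPositiveMatrixMap.sum_negPart_eigenvalues_map_le (hT : IsPositiveMatrixMap T)
    (hTtr : IsTracePreservingMap T) (hA : A.IsHermitian) (hTA : (T A).IsHermitian) :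
    ∑ i, (hTA.eigenvalues i)⁻ ≤ ∑ i, (hA.eigenvalues i)⁻ := by
  have := hTA.sum_negPart_eigenvalues_le (hT _ A.posSemidef_posPart)
    (hT _ A.posSemidef_negPart) (map_eq_map_posPart_sub_map_negPart hA)
  rwa [hTtr, hA.re_trace_negPart] at this

end PositiveMap

theorem schattenNorm_traceless_bound_even_general
    (n : ℕ) (p : ℝ≥0∞) (hp : 1 ≤ p)
    (T : Matrix (Fin n) (Fin n) ℂ →ₗ[ℂ] Matrix (Fin n) (Fin n) ℂ)
    (hTpos : IsPositiveMatrixMap T) (hTtr : IsTracePreservingMap T)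
    (A : Matrix (Fin n) (Fin n) ℂ) (hA : A.IsHermitian) (hA0 : A.trace = 0) :
    schattenNorm p (T A) ≤ ((n : ℝ) / 2) ^ ((1 : ℝ) - 1 / p.toReal) * schattenNorm p A := by
  set e := (1 : ℝ) - 1 / p.toReal
  set t := ∑ i, (hA.eigenvalues i)⁺
  have hneg : ∑ i, (hA.eigenvalues i)⁻ = t := by
    have hsum := hA.trace_eq_sum_eigenvalues
    rw [hA0, ← RCLike.ofReal_sum, eq_comm, RCLike.ofReal_eq_zero] at hsum
    exact sum_negPart_eq_sum_posPart_of_sum_eq_zero hsum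
  have hTA := hTpos.isHermitian_map_s10 hA
  have hTA_le : schattenNorm p (T A) ≤ 2 ^ (1 / p.toReal) * t :=
    hTA.schattenNorm_le_of_sum_posPart_le_of_sum_negPart_le hp
      (hTpos.sum_posPart_eigenvalues_map_le hTtr hA hTA)
      (hneg ▸ hTpos.sum_negPart_eigenvalues_map_le hTtr hA hTA)
  have hA_ge : 2 * t ≤ (n : ℝ) ^ e * schattenNorm p A := by
    have habs : ∑ i, |hA.eigenvalues i| = 2 * t := by
      simp only [← posPart_add_negPart, Finset.sum_add_distrib, hneg, two_mul, t]
    exact habs ▸ hA.sum_abs_eigenvalues_le_schattenNorm hp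
  have h2e : (0 : ℝ) < 2 ^ e := by positivity
  calc schattenNorm p (T A) ≤ 2 ^ (1 / p.toReal) * t := hTA_le
    _ = 2 * t / 2 ^ e := by
        rw [eq_div_iff h2e.ne', mul_right_comm, ← Real.rpow_add two_pos]
        simp [e]
    _ ≤ (n : ℝ) ^ e * schattenNorm p A / 2 ^ e := by gcongr
    _ = ((n : ℝ) / 2) ^ e * schattenNorm p A := by
        rw [Real.div_rpow (Nat.cast_nonneg n) zero_le_two]
        ring

/-- **Theorem 4, even case.** Let `n` be even, `1 ≤ p ≤ ∞`, and `T : M_n(ℂ) → M_n(ℂ)` a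
positive trace preserving map.  Then for every traceless Hermitian `A`,
`‖T(A)‖_p ≤ (n/2)^{1-1/p} ‖A‖_p` (reading `1/p = 0` for `p = ∞`). -/
theorem schattenNorm_traceless_bound_even
    (n : ℕ) (hn : Even n) (p : ℝ≥0∞) (hp : 1 ≤ p)
    (T : Matrix (Fin n) (Fin n) ℂ →ₗ[ℂ] Matrix (Fin n) (Fin n) ℂ)
    (hTpos : IsPositiveMatrixMap T) (hTtr : IsTracePreservingMap T)
    (A : Matrix (Fin n) (Fin n) ℂ) (hA : A.IsHermitian) (hA0 : A.trace = 0) :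
    schattenNorm p (T A) ≤ ((n : ℝ) / 2) ^ ((1 : ℝ) - 1 / p.toReal) * schattenNorm p A :=
  schattenNorm_traceless_bound_even_general n p hp T hTpos hTtr A hA hA0
end

section
/- Let P ∈ M_n(ℂ) be an orthogonal projection of rank d with 1 ≤ d < n, and define the (completely positive, trace preserving) linear map T : M_n(ℂ) → M_n(ℂ) by T(A) = |0⟩⟨0| tr(PA) + |1⟩⟨1| tr((𝟙−P)A), where |0⟩⟨0| and |1⟩⟨1| are two fixed orthogonal rank-one projections. Then for the traceless Hermitian matrix A = P − (d/(n−d))(𝟙−P) and 1 ≤ p < ∞ one has ‖T(A)‖_p / ‖A‖_p = (2 d^p / (d + d^p (n−d)^{1-p}))^{1/p}. -/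
open scoped ENNReal ComplexOrder

/-!
Both `Aᴴ A` and `T(A)ᴴ T(A)` have the form `a² Q + b² (𝟙 − Q)` with `Q` idempotent:
`Q = P`, `a = 1`, `b = d/(n−d)` for `A`, and `Q = |0⟩⟨0| + |1⟩⟨1|`, `a = d`, `b = 0` for
`T(A) = d (|0⟩⟨0| − |1⟩⟨1|)`, because `tr(PA) = d = −tr((𝟙−P)A)`. Such a Hermitian matrix is
annihilated by `(X − a²)(X − b²)`, so its eigenvalues take only the values `a²` and `b²`, and
its trace `a² tr Q + b² (n − tr Q)` fixes their multiplicities. Hence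
`‖A‖_p^p = d + (n−d)(d/(n−d))^p = d + dᵖ (n−d)^{1−p}` and `‖T(A)‖_p^p = 2 dᵖ`.
-/

open Finset Matrix

theorem Finset.sum_comp_eq_of_forall_eq_or_eq {ι : Type*} [Fintype ι] {lam : ι → ℝ} {a b : ℝ}
    (h : ∀ i, lam i = a ∨ lam i = b) (g : ℝ → ℝ) :
    ∑ i, g (lam i) = #{i | lam i = a} * g a + (Fintype.card ι - #{i | lam i = a}) * g b := by
  classical
  have hg : ∀ i, g (lam i) = if lam i = a then g a else g b := fun i => by
    split_ifs with hi
    · rw [hi]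
    · rw [(h i).resolve_left hi]
  rw [Finset.sum_congr rfl fun i _ => hg i, Finset.sum_ite, Finset.sum_const, Finset.sum_const,
    nsmul_eq_mul, nsmul_eq_mul, ← Finset.card_univ,
    ← Finset.card_filter_add_card_filter_not (s := Finset.univ) (fun i => lam i = a)]
  push_cast
  ring

theorem Finset.sum_comp_eq_of_forall_eq_or_eq_of_sum_eq {ι : Type*} [Fintype ι] {lam : ι → ℝ}
    {a b k : ℝ} (h : ∀ i, lam i = a ∨ lam i = b)
    (hsum : ∑ i, lam i = k * a + (Fintype.card ι - k) * b) (g : ℝ → ℝ) :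
    ∑ i, g (lam i) = k * g a + (Fintype.card ι - k) * g b := by
  classical
  rw [Finset.sum_comp_eq_of_forall_eq_or_eq h]
  rcases eq_or_ne a b with rfl | hab
  · ring
  · have hcard : (#{i | lam i = a} : ℝ) = k := by
      have := Finset.sum_comp_eq_of_forall_eq_or_eq h id
      simp only [id] at this
      have : ((#{i | lam i = a} : ℝ) - k) * (a - b) = 0 := by
        linear_combination this.symm.trans hsum
      exact sub_eq_zero.mp ((mul_eq_zero.mp this).resolve_right (sub_ne_zero.mpr hab))
    rw [hcard]

namespace Matrix.IsHermitian

variable {𝕜 n : Type*} [RCLike 𝕜] [Fintype n] [DecidableEq n] {M : Matrix n n 𝕜}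

theorem eigenvalues_eq_or_eq_of_mul_eq_zero (hM : M.IsHermitian) {a b : ℝ}
    (h : (M - (a : 𝕜) • 1) * (M - (b : 𝕜) • 1) = 0) (i : n) :
    hM.eigenvalues i = a ∨ hM.eigenvalues i = b := by
  set v : n → 𝕜 := ⇑(hM.eigenvectorBasis i)
  set μ : 𝕜 := (hM.eigenvalues i : 𝕜)
  have hv : v ≠ 0 := (WithLp.ofLp_eq_zero 2).ne.2 (hM.eigenvectorBasis.orthonormal.ne_zero i)
  have hMv : M *ᵥ v = μ • v := by
    simpa only [RCLike.real_smul_eq_coe_smul (K := 𝕜)] using hM.mulVec_eigenvectorBasis i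
  have hshift : ∀ c : 𝕜, (M - c • 1) *ᵥ v = (μ - c) • v := fun c => by
    rw [sub_mulVec, smul_mulVec, one_mulVec, hMv, sub_smul]
  have : ((μ - a) * (μ - b)) • v = 0 := by
    rw [← zero_mulVec v, ← h, ← mulVec_mulVec, hshift, mulVec_smul, hshift, smul_smul, mul_comm]
  rcases mul_eq_zero.mp ((smul_eq_zero.mp this).resolve_right hv) with h' | h'
  · exact .inl (RCLike.ofReal_injective (sub_eq_zero.mp h'))
  · exact .inr (RCLike.ofReal_injective (sub_eq_zero.mp h'))

theorem sum_comp_eigenvalues_of_eq_smul_add_smul (hM : M.IsHermitian) {Q : Matrix n n 𝕜}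
    (hQ : IsIdempotentElem Q) {k : ℕ} (hk : Q.trace = k) {a b : ℝ}
    (hMQ : M = (a : 𝕜) • Q + (b : 𝕜) • (1 - Q)) (f : ℝ → ℝ) :
    ∑ i, f (hM.eigenvalues i) = k * f a + (Fintype.card n - k) * f b := by
  have hQQ : (1 - Q) * Q = 0 := by rw [sub_mul, one_mul, hQ.eq, sub_self]
  have hann : (M - (a : 𝕜) • 1) * (M - (b : 𝕜) • 1) = 0 := by
    have e1 : M - (a : 𝕜) • 1 = ((b : 𝕜) - a) • (1 - Q) := by rw [hMQ]; module
    have e2 : M - (b : 𝕜) • 1 = ((a : 𝕜) - b) • Q := by rw [hMQ]; module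
    rw [e1, e2, smul_mul_smul, hQQ, smul_zero]
  have htrace : ∑ i, hM.eigenvalues i = k * a + (Fintype.card n - k) * b := by
    apply RCLike.ofReal_injective (K := 𝕜)
    rw [RCLike.ofReal_sum, ← hM.trace_eq_sum_eigenvalues, hMQ]
    simp only [trace_add, trace_smul, trace_sub, trace_one, hk, smul_eq_mul]
    push_cast
    ring
  exact Finset.sum_comp_eq_of_forall_eq_or_eq_of_sum_eq
    (hM.eigenvalues_eq_or_eq_of_mul_eq_zero hann) htrace f

end Matrix.IsHermitian

theorem sum_comp_singularValues_of_conjTranspose_mul_self_eq {n : ℕ}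
    {A Q : Matrix (Fin n) (Fin n) ℂ} (hQ : IsIdempotentElem Q) {k : ℕ} (hk : Q.trace = k)
    {a b : ℝ} (ha : 0 ≤ a) (hb : 0 ≤ b)
    (hAQ : Aᴴ * A = ((a ^ 2 : ℝ) : ℂ) • Q + ((b ^ 2 : ℝ) : ℂ) • (1 - Q)) (f : ℝ → ℝ) :
    ∑ i, f (singularValues A i) = k * f a + (n - k) * f b := by
  have := (posSemidef_conjTranspose_mul_self A).isHermitian.sum_comp_eigenvalues_of_eq_smul_add_smul
    (a := a ^ 2) (b := b ^ 2) hQ hk hAQ (f ∘ Real.sqrt)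
  simpa only [singularValues, Function.comp, Real.sqrt_sq ha, Real.sqrt_sq hb,
    Fintype.card_fin] using this

theorem schattenNorm_ofReal {n : ℕ} {p : ℝ} (hp : 0 ≤ p) (A : Matrix (Fin n) (Fin n) ℂ) :
    schattenNorm (ENNReal.ofReal p) A = (∑ i, singularValues A i ^ p) ^ (1 / p) := by
  rw [schattenNorm, if_neg ENNReal.ofReal_ne_top, ENNReal.toReal_ofReal hp]

namespace Matrix

section Projection

variable {n : Type*} [Fintype n] [DecidableEq n] {P : Matrix n n ℂ}

theorem conjTranspose_mul_self_sub_smul_one_sub (hP : P.IsHermitian) (hproj : IsIdempotentElem P)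
    (c : ℝ) :
    (P - (c : ℂ) • (1 - P))ᴴ * (P - (c : ℂ) • (1 - P)) = P + ((c ^ 2 : ℝ) : ℂ) • (1 - P) := by
  rw [conjTranspose_sub, conjTranspose_smul, conjTranspose_sub, conjTranspose_one, hP.eq,
    Complex.star_def, Complex.conj_ofReal]
  simp only [sub_mul, mul_sub, Matrix.smul_mul, Matrix.mul_smul, hproj.eq, mul_one, one_mul]
  push_cast
  module

theorem trace_mul_sub_smul_one_sub (hproj : IsIdempotentElem P) (c : ℂ) :
    (P * (P - c • (1 - P))).trace = P.trace := by
  rw [mul_sub, Matrix.mul_smul, mul_sub, mul_one, hproj.eq, sub_self, smul_zero, sub_zero]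

theorem trace_one_sub_mul_sub_smul_one_sub (hproj : IsIdempotentElem P) (c : ℂ) :
    ((1 - P) * (P - c • (1 - P))).trace = -c * (Fintype.card n - P.trace) := by
  have hQ : (1 - P) * (1 - P) = 1 - P := (hproj.one_sub).eq
  rw [mul_sub, Matrix.mul_smul, hQ, sub_mul, one_mul, hproj.eq, sub_self, zero_sub, trace_neg,
    trace_smul, trace_sub, trace_one, smul_eq_mul, neg_mul]

end Projection

section Single

variable {n : Type*} [Fintype n] [DecidableEq n] {i j : n}

theorem isIdempotentElem_single_add_single (hij : i ≠ j) :
    IsIdempotentElem (single i i (1 : ℂ) + single j j 1) := by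
  simp [IsIdempotentElem, add_mul, mul_add, single_mul_single_of_ne _ _ _ _ hij,
    single_mul_single_of_ne _ _ _ _ hij.symm]

theorem conjTranspose_mul_self_smul_single_sub_single (hij : i ≠ j) (x : ℝ) :
    ((x : ℂ) • (single i i (1 : ℂ) - single j j 1))ᴴ * ((x : ℂ) • (single i i 1 - single j j 1))
      = ((x ^ 2 : ℝ) : ℂ) • (single i i 1 + single j j 1) := by
  simp [sub_mul, mul_sub, single_mul_single_of_ne _ _ _ _ hij,
    single_mul_single_of_ne _ _ _ _ hij.symm, conjTranspose_sub, sq]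

end Single

end Matrix

theorem Real.mul_div_rpow_eq_rpow_mul_rpow_one_sub {m x : ℝ} (hm : 0 < m) (hx : 0 ≤ x) (p : ℝ) :
    m * (x / m) ^ p = x ^ p * m ^ (1 - p) := by
  rw [Real.div_rpow hx hm.le, Real.rpow_sub hm, Real.rpow_one]
  field_simp

/-- For the completely positive trace preserving map
`T(A) = |0⟩⟨0| tr(PA) + |1⟩⟨1| tr((𝟙−P)A)`, with `P` a rank-`d` orthogonal projection
(`1 ≤ d < n`), and the traceless Hermitian matrix `A = P − (d/(n−d))(𝟙−P)`, one has
`‖T(A)‖_p / ‖A‖_p = (2 d^p / (d + d^p (n−d)^{1-p}))^{1/p}` for `1 ≤ p < ∞`. -/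
theorem schattenNorm_ratio_projection_map
    (n d : ℕ) (hd1 : 1 ≤ d) (hdn : d < n)
    (P : Matrix (Fin n) (Fin n) ℂ) (hP : P.IsHermitian) (hproj : P * P = P)
    (htr : P.trace = (d : ℂ)) (p : ℝ) (hp : 1 ≤ p)
    (A : Matrix (Fin n) (Fin n) ℂ)
    (hA : A = P - ((d : ℂ) / ((n : ℂ) - (d : ℂ))) • (1 - P))
    (TA : Matrix (Fin n) (Fin n) ℂ)
    (hTA : TA = (P * A).trace • Matrix.single (⟨0, by omega⟩ : Fin n) ⟨0, by omega⟩ 1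
        + ((1 - P) * A).trace • Matrix.single (⟨1, by omega⟩ : Fin n) ⟨1, by omega⟩ 1) :
    schattenNorm (ENNReal.ofReal p) TA / schattenNorm (ENNReal.ofReal p) A
      = (2 * (d : ℝ) ^ p / ((d : ℝ) + (d : ℝ) ^ p * ((n : ℝ) - (d : ℝ)) ^ (1 - p))) ^ (1 / p) := by
  have hp0 : 0 < p := by linarith
  have hnd : (0 : ℝ) < n - d := sub_pos.mpr (by exact_mod_cast hdn)
  set c : ℝ := d / (n - d)
  have hcC : ((d : ℂ) / ((n : ℂ) - (d : ℂ))) = (c : ℂ) := by simp [c]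
  have hcd : (c : ℂ) * (n - d) = d := by
    rw [← hcC]; exact div_mul_cancel₀ _ (by exact_mod_cast hnd.ne')
  rw [hcC] at hA
  set i₀ : Fin n := ⟨0, by omega⟩
  set i₁ : Fin n := ⟨1, by omega⟩
  have hne : i₀ ≠ i₁ := by simp [i₀, i₁, Fin.ext_iff]
  have hTA' : TA = ((d : ℝ) : ℂ) • (single i₀ i₀ 1 - single i₁ i₁ 1) := by
    rw [hTA, hA, trace_mul_sub_smul_one_sub hproj, trace_one_sub_mul_sub_smul_one_sub hproj, htr,
      Fintype.card_fin, neg_mul, hcd, Complex.ofReal_natCast, smul_sub, neg_smul, sub_eq_add_neg]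
  have hsumA : ∑ i, singularValues A i ^ p = d * 1 ^ p + (n - d) * c ^ p :=
    sum_comp_singularValues_of_conjTranspose_mul_self_eq hproj htr zero_le_one
      (div_nonneg d.cast_nonneg hnd.le)
      (by rw [hA, conjTranspose_mul_self_sub_smul_one_sub hP hproj, one_pow, Complex.ofReal_one,
        one_smul]) (· ^ p)
  have hsumT : ∑ i, singularValues TA i ^ p = 2 * d ^ p + (n - 2) * 0 ^ p :=
    sum_comp_singularValues_of_conjTranspose_mul_self_eq (k := 2)
      (isIdempotentElem_single_add_single hne)
      (by rw [trace_add, trace_single_eq_same, trace_single_eq_same]; norm_num)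
      d.cast_nonneg le_rfl
      (by rw [hTA', conjTranspose_mul_self_smul_single_sub_single hne]; simp) (· ^ p)
  rw [schattenNorm_ofReal hp0.le, schattenNorm_ofReal hp0.le, hsumA, hsumT, Real.one_rpow,
    Real.zero_rpow hp0.ne', mul_zero, add_zero, mul_one,
    Real.mul_div_rpow_eq_rpow_mul_rpow_one_sub hnd d.cast_nonneg,
    ← Real.div_rpow (by positivity) (by have := hnd.le; positivity)]
end

section
/- Let T : M_2(ℂ) → M_2(ℂ) be a positive trace preserving linear map, written in Bloch form as T(𝟙 + w·σ) = 𝟙 + (r + Rw)·σ for some r ∈ ℝ³ and real 3×3 matrix R (where σ = (σ₁,σ₂,σ₃) are the Pauli matrices). Then the unital trace preserving linear map T₁ defined by T₁(𝟙 + w·σ) = 𝟙 + (Rw)·σ is also positive. -/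
/-! Every positive semidefinite `2 × 2` matrix is `c • (𝟙 + w·σ)` with `c ≥ 0` and `‖w‖ ≤ 1`, and
`𝟙 + w·σ` is positive semidefinite exactly when `‖w‖ ≤ 1`. So positivity of `T` says that
`w ↦ r + Rw` maps the unit ball into itself. Applying this to `w` and `-w`, the parallelogram law
gives `‖Rw‖² ≤ (‖r + Rw‖² + ‖r - Rw‖²) / 2 - ‖r‖² ≤ 1`, which is positivity of `T₁`. -/

open scoped ComplexOrder

/-- The Pauli matrices `σ₁, σ₂, σ₃`. -/
def pauli : Fin 3 → Matrix (Fin 2) (Fin 2) ℂ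
  | 0 => !![0, 1; 1, 0]
  | 1 => !![0, -Complex.I; Complex.I, 0]
  | 2 => !![1, 0; 0, -1]

/-- The Bloch parametrization `𝟙 + w·σ`, `w ∈ ℝ³`. -/
noncomputable def bloch (w : Fin 3 → ℝ) : Matrix (Fin 2) (Fin 2) ℂ :=
  1 + ∑ i, (w i : ℂ) • pauli i

open Matrix

lemma bloch_eq (w : Fin 3 → ℝ) :
    bloch w = !![(1 + w 2 : ℂ), (w 0 : ℂ) - w 1 * Complex.I;
      (w 0 : ℂ) + w 1 * Complex.I, 1 - w 2] := by
  ext i j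
  fin_cases i <;> fin_cases j <;> simp [bloch, pauli, Fin.sum_univ_three] <;> ring

lemma isHermitian_bloch (w : Fin 3 → ℝ) : (bloch w).IsHermitian := by
  rw [bloch_eq]
  ext i j
  fin_cases i <;> fin_cases j <;> simp [Complex.ext_iff]

lemma det_bloch (w : Fin 3 → ℝ) : (bloch w).det = ((1 - w ⬝ᵥ w : ℝ) : ℂ) := by
  rw [bloch_eq, det_fin_two_of]
  push_cast [dotProduct, Fin.sum_univ_three]
  ring_nf
  rw [Complex.I_sq]
  ring

-- Cayley–Hamilton, with `tr (bloch w) = 2` and `det (bloch w) = 1 - ‖w‖²`.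
lemma bloch_mul_self (w : Fin 3 → ℝ) :
    bloch w * bloch w = (2 : ℂ) • bloch w - ((1 - w ⬝ᵥ w : ℝ) : ℂ) • 1 := by
  rw [bloch_eq]
  ext i j
  fin_cases i <;> fin_cases j <;>
    simp [mul_apply, Fin.sum_univ_two, dotProduct, Fin.sum_univ_three] <;> ring_nf <;>
    simp only [Complex.I_sq] <;> ring

lemma posSemidef_bloch_iff {w : Fin 3 → ℝ} : (bloch w).PosSemidef ↔ w ⬝ᵥ w ≤ 1 := by
  constructor
  · intro h
    have hdet := h.det_nonneg
    rw [det_bloch, Complex.zero_le_real] at hdet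
    linarith
  · intro h
    have hsplit : bloch w =
        (((1 - w ⬝ᵥ w) / 2 : ℝ) : ℂ) • 1 + ((1 / 2 : ℝ) : ℂ) • ((bloch w)ᴴ * bloch w) := by
      rw [(isHermitian_bloch w).eq, bloch_mul_self, smul_sub, smul_smul, smul_smul]
      push_cast
      module
    rw [hsplit]
    exact (PosSemidef.one.smul (Complex.zero_le_real.2 (by linarith))).add
      ((posSemidef_conjTranspose_mul_self _).smul (Complex.zero_le_real.2 (by norm_num)))

lemma dotProduct_self_le_one_of_add_of_sub {ι : Type*} [Fintype ι] {r v : ι → ℝ}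
    (hadd : (r + v) ⬝ᵥ (r + v) ≤ 1) (hsub : (r - v) ⬝ᵥ (r - v) ≤ 1) : v ⬝ᵥ v ≤ 1 := by
  have parallelogram : (r + v) ⬝ᵥ (r + v) + (r - v) ⬝ᵥ (r - v) = 2 * (r ⬝ᵥ r) + 2 * (v ⬝ᵥ v) := by
    simp only [add_dotProduct, dotProduct_add, sub_dotProduct, dotProduct_sub, dotProduct_comm v r]
    ring
  have : 0 ≤ r ⬝ᵥ r := by simpa using dotProduct_star_self_nonneg r
  linarith

-- Since `tr (σᵢ σⱼ) = 2 δᵢⱼ`, these are the `σ`-coordinates of a Hermitian matrix.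
noncomputable def pauliCoeff (A : Matrix (Fin 2) (Fin 2) ℂ) (i : Fin 3) : ℝ :=
  (A * pauli i).trace.re / 2

lemma Matrix.IsHermitian.eq_pauli_expansion {A : Matrix (Fin 2) (Fin 2) ℂ} (hA : A.IsHermitian) :
    A = ((A.trace.re / 2 : ℝ) : ℂ) • 1 + ∑ i, (pauliCoeff A i : ℂ) • pauli i := by
  have h10 : A 1 0 = star (A 0 1) := (hA.apply 1 0).symm
  have h00 : (A 0 0).im = 0 := Complex.conj_eq_iff_im.1 (hA.apply 0 0)
  have h11 : (A 1 1).im = 0 := Complex.conj_eq_iff_im.1 (hA.apply 1 1)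
  ext i j
  fin_cases i <;> fin_cases j <;>
    simp [pauliCoeff, pauli, trace_fin_two, mul_apply, Fin.sum_univ_two, Fin.sum_univ_three,
      Complex.ext_iff, h10, h00, h11] <;> ring

lemma smul_bloch_inv_smul {c : ℝ} (hc : c ≠ 0) (v : Fin 3 → ℝ) :
    (c : ℂ) • bloch (c⁻¹ • v) = (c : ℂ) • 1 + ∑ i, (v i : ℂ) • pauli i := by
  simp only [bloch, smul_add, Finset.smul_sum, smul_smul, Pi.smul_apply, smul_eq_mul,
    Complex.ofReal_mul, Complex.ofReal_inv]
  congr 2 with i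
  field_simp

lemma Matrix.PosSemidef.exists_eq_smul_bloch {A : Matrix (Fin 2) (Fin 2) ℂ} (hA : A.PosSemidef) :
    ∃ c : ℝ, 0 ≤ c ∧ ∃ w : Fin 3 → ℝ, w ⬝ᵥ w ≤ 1 ∧ A = (c : ℂ) • bloch w := by
  obtain ⟨htr_re, htr_im⟩ := Complex.nonneg_iff.1 hA.trace_nonneg
  rcases htr_re.eq_or_lt with htr | htr
  · refine ⟨0, le_rfl, 0, by simp, ?_⟩
    rw [Complex.ofReal_zero, zero_smul, ← hA.trace_eq_zero_iff]
    exact Complex.ext htr.symm htr_im.symm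
  · set c := A.trace.re / 2
    have hc : 0 < c := by positivity
    have hA_eq : A = (c : ℂ) • bloch (c⁻¹ • pauliCoeff A) := by
      rw [smul_bloch_inv_smul hc.ne']
      exact hA.isHermitian.eq_pauli_expansion
    refine ⟨c, hc.le, _, posSemidef_bloch_iff.1 ?_, hA_eq⟩
    have : ((c⁻¹ : ℝ) : ℂ) • A = bloch (c⁻¹ • pauliCoeff A) := by
      conv_lhs => rw [hA_eq]
      rw [smul_smul, ← Complex.ofReal_mul, inv_mul_cancel₀ hc.ne', Complex.ofReal_one, one_smul]
    rw [← this]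
    exact hA.smul (Complex.zero_le_real.2 (inv_nonneg.2 hc.le))

theorem unital_part_of_qubit_map_positive_general
    (T T₁ : Matrix (Fin 2) (Fin 2) ℂ →ₗ[ℂ] Matrix (Fin 2) (Fin 2) ℂ)
    (hTpos : IsPositiveMatrixMap T)
    (r : Fin 3 → ℝ) (R : Matrix (Fin 3) (Fin 3) ℝ)
    (hT : ∀ w : Fin 3 → ℝ, T (bloch w) = bloch (r + R.mulVec w))
    (hT₁ : ∀ w : Fin 3 → ℝ, T₁ (bloch w) = bloch (R.mulVec w)) :
    IsPositiveMatrixMap T₁ := by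
  intro A hA
  obtain ⟨c, hc, w, hw, rfl⟩ := hA.exists_eq_smul_bloch
  have hadd : (r + R *ᵥ w) ⬝ᵥ (r + R *ᵥ w) ≤ 1 :=
    posSemidef_bloch_iff.1 (hT w ▸ hTpos _ (posSemidef_bloch_iff.2 hw))
  have hsub : (r - R *ᵥ w) ⬝ᵥ (r - R *ᵥ w) ≤ 1 := by
    rw [sub_eq_add_neg, ← mulVec_neg, ← posSemidef_bloch_iff, ← hT]
    exact hTpos _ (posSemidef_bloch_iff.2 (by rwa [neg_dotProduct_neg]))
  rw [map_smul, hT₁]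
  exact (posSemidef_bloch_iff.2 (dotProduct_self_le_one_of_add_of_sub hadd hsub)).smul
    (Complex.zero_le_real.2 hc)

/-- Let `T : M₂(ℂ) → M₂(ℂ)` be a positive trace preserving map, acting in Bloch form as
`T(𝟙 + w·σ) = 𝟙 + (r + Rw)·σ` with `r ∈ ℝ³` and `R` a real `3×3` matrix.  Then the unital
trace preserving map `T₁` with `T₁(𝟙 + w·σ) = 𝟙 + (Rw)·σ` is also positive. -/
theorem unital_part_of_qubit_map_positive
    (T T₁ : Matrix (Fin 2) (Fin 2) ℂ →ₗ[ℂ] Matrix (Fin 2) (Fin 2) ℂ)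
    (hTpos : IsPositiveMatrixMap T) (hTtr : IsTracePreservingMap T)
    (r : Fin 3 → ℝ) (R : Matrix (Fin 3) (Fin 3) ℝ)
    (hT : ∀ w : Fin 3 → ℝ, T (bloch w) = bloch (r + R.mulVec w))
    (hT₁unital : T₁ 1 = 1) (hT₁tr : IsTracePreservingMap T₁)
    (hT₁ : ∀ w : Fin 3 → ℝ, T₁ (bloch w) = bloch (R.mulVec w)) :
    IsPositiveMatrixMap T₁ :=
  unital_part_of_qubit_map_positive_general T T₁ hTpos r R hT hT₁
end
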